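/- arXiv:0912.4872 — 3 statements merged into one kernel-verified Lean document; each statement's English description precedes it below -/
import Mathlib

section
/- If the joint pmf p(x^n||y^n) is dyadic in the sense that each conditional probability p(x_i | x^{i-1}, y^i) is a power of 2 (or zero), then there exists an instantaneous lossless source encoder with causal side information achieving E[L(X^n||Y^n)] = Σ_{i=1}^n H(X_i | X^{i-1}, Y^i) exactly. -/
open scoped Classical
open Real

noncomputable section

variable {α β : Type} [Fintype α] [DecidableEq α] [Fintype β] [DecidableEq β]

/-- Probability of the event `E` under the joint pmf `p` of `(X^n, Y^n)`. -/
def pr {n : ℕ} (p : (Fin n → α) → (Fin n → β) → ℝ)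
    (E : (Fin n → α) → (Fin n → β) → Prop) : ℝ :=
  ∑ x, ∑ y, if E x y then p x y else 0

/-- `p` is a probability mass function on pairs of sequences. -/
def IsPmf {n : ℕ} (p : (Fin n → α) → (Fin n → β) → ℝ) : Prop :=
  (∀ x y, 0 ≤ p x y) ∧ ∑ x, ∑ y, p x y = 1

/-- The conditional pmf `p(x_i | x^{i-1}, y^{i-d})` evaluated along `(x, y)`. -/
def condX {n : ℕ} (p : (Fin n → α) → (Fin n → β) → ℝ) (d : ℕ) (i : Fin n)
    (x : Fin n → α) (y : Fin n → β) : ℝ :=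
  pr p (fun x' y' => (∀ j, j < i → x' j = x j) ∧ x' i = x i ∧
      ∀ j : Fin n, (j : ℕ) + d ≤ (i : ℕ) → y' j = y j) /
  pr p (fun x' y' => (∀ j, j < i → x' j = x j) ∧
      ∀ j : Fin n, (j : ℕ) + d ≤ (i : ℕ) → y' j = y j)

/-- The conditional pmf `p(y_i | y^{i-1}, x^{i-d})` evaluated along `(x, y)`. -/
def condY {n : ℕ} (p : (Fin n → α) → (Fin n → β) → ℝ) (d : ℕ) (i : Fin n)
    (x : Fin n → α) (y : Fin n → β) : ℝ :=
  pr p (fun x' y' => (∀ j, j < i → y' j = y j) ∧ y' i = y i ∧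
      ∀ j : Fin n, (j : ℕ) + d ≤ (i : ℕ) → x' j = x j) /
  pr p (fun x' y' => (∀ j, j < i → y' j = y j) ∧
      ∀ j : Fin n, (j : ℕ) + d ≤ (i : ℕ) → x' j = x j)

/-- Causally conditioned pmf `p(x^n || y^{n-d}) = ∏ᵢ p(xᵢ | x^{i-1}, y^{i-d})`. -/
def ccX {n : ℕ} (p : (Fin n → α) → (Fin n → β) → ℝ) (d : ℕ)
    (x : Fin n → α) (y : Fin n → β) : ℝ :=
  ∏ i, condX p d i x y

/-- Causally conditioned pmf `p(y^n || x^{n-d}) = ∏ᵢ p(yᵢ | y^{i-1}, x^{i-d})`. -/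
def ccY {n : ℕ} (p : (Fin n → α) → (Fin n → β) → ℝ) (d : ℕ)
    (x : Fin n → α) (y : Fin n → β) : ℝ :=
  ∏ i, condY p d i x y

/-- Marginal pmf of `X^n`. -/
def pX {n : ℕ} (p : (Fin n → α) → (Fin n → β) → ℝ) (x : Fin n → α) : ℝ := ∑ y, p x y

/-- Marginal pmf of `Y^n`. -/
def pY {n : ℕ} (p : (Fin n → α) → (Fin n → β) → ℝ) (y : Fin n → β) : ℝ := ∑ x, p x y

/-- `H(X^n)` in bits. -/
def HX {n : ℕ} (p : (Fin n → α) → (Fin n → β) → ℝ) : ℝ :=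
  -(∑ x, ∑ y, p x y * Real.logb 2 (pX p x))

/-- `H(Y^n)` in bits. -/
def HY {n : ℕ} (p : (Fin n → α) → (Fin n → β) → ℝ) : ℝ :=
  -(∑ x, ∑ y, p x y * Real.logb 2 (pY p y))

/-- Joint entropy `H(X^n, Y^n)` in bits. -/
def Hjoint {n : ℕ} (p : (Fin n → α) → (Fin n → β) → ℝ) : ℝ :=
  -(∑ x, ∑ y, p x y * Real.logb 2 (p x y))

/-- Conditional entropy `H(X_i | X^{i-1}, Y^{i-d})` in bits. -/
def HcondX {n : ℕ} (p : (Fin n → α) → (Fin n → β) → ℝ) (d : ℕ) (i : Fin n) : ℝ :=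
  -(∑ x, ∑ y, p x y * Real.logb 2 (condX p d i x y))

/-- Conditional entropy `H(Y_i | Y^{i-1}, X^{i-d})` in bits. -/
def HcondY {n : ℕ} (p : (Fin n → α) → (Fin n → β) → ℝ) (d : ℕ) (i : Fin n) : ℝ :=
  -(∑ x, ∑ y, p x y * Real.logb 2 (condY p d i x y))

/-- Causally conditional entropy `H(X^n || Y^{n-d}) = Σᵢ H(Xᵢ | X^{i-1}, Y^{i-d})`. -/
def HccX {n : ℕ} (p : (Fin n → α) → (Fin n → β) → ℝ) (d : ℕ) : ℝ := ∑ i, HcondX p d i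

/-- Causally conditional entropy `H(Y^n || X^{n-d})`. -/
def HccY {n : ℕ} (p : (Fin n → α) → (Fin n → β) → ℝ) (d : ℕ) : ℝ := ∑ i, HcondY p d i

/-- Conditional mutual information `I(Y^i; X_i | X^{i-1})`
(as the expectation of `log (p(xᵢ|x^{i-1},y^i) / p(xᵢ|x^{i-1}))`;
note `condX p n` is `p(xᵢ|x^{i-1})`, conditioning on no `y`'s at all). -/
def cmiYX {n : ℕ} (p : (Fin n → α) → (Fin n → β) → ℝ) (i : Fin n) : ℝ :=
  ∑ x, ∑ y, p x y * Real.logb 2 (condX p 0 i x y / condX p n i x y)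

/-- Conditional mutual information `I(X^i; Y_i | Y^{i-1})`. -/
def cmiXY {n : ℕ} (p : (Fin n → α) → (Fin n → β) → ℝ) (i : Fin n) : ℝ :=
  ∑ x, ∑ y, p x y * Real.logb 2 (condY p 0 i x y / condY p n i x y)

/-- Directed information `I(Y^n → X^n) = Σᵢ I(Y^i; X_i | X^{i-1})`. -/
def dirYX {n : ℕ} (p : (Fin n → α) → (Fin n → β) → ℝ) : ℝ := ∑ i, cmiYX p i

/-- Directed information `I(X^n → Y^n) = Σᵢ I(X^i; Y_i | Y^{i-1})`. -/
def dirXY {n : ℕ} (p : (Fin n → α) → (Fin n → β) → ℝ) : ℝ := ∑ i, cmiXY p i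

/-- Directed information `I(Y^{n-1} → X^n) = Σᵢ I(Y^{i-1}; X_i | X^{i-1})`
(the term for `i = 1` vanishes, so we may sum over all `i`). -/
def dirY1X {n : ℕ} (p : (Fin n → α) → (Fin n → β) → ℝ) : ℝ :=
  ∑ i, ∑ x, ∑ y, p x y * Real.logb 2 (condX p 1 i x y / condX p n i x y)

/-- Mutual information `I(X^n; Y^n)` in bits. -/
def miXY {n : ℕ} (p : (Fin n → α) → (Fin n → β) → ℝ) : ℝ :=
  ∑ x, ∑ y, p x y * Real.logb 2 (p x y / (pX p x * pY p y))

/-- An instantaneous lossless source encoder with causal side information: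
`M i x y` is the binary codeword emitted at time `i`; it depends only on
`(x^i, y^i)`, and for every fixed history `(x^{i-1}, y^i)` the map
`x_i ↦ M i (x^{i-1} x_i) y` is prefix-free (in particular injective). -/
def IsCausalEncoder {n : ℕ}
    (M : Fin n → (Fin n → α) → (Fin n → β) → List Bool) : Prop :=
  (∀ i x x' y y', (∀ j, j ≤ i → x j = x' j) → (∀ j, j ≤ i → y j = y' j) →
    M i x y = M i x' y') ∧
  (∀ i x x' y, (∀ j, j < i → x j = x' j) → x i ≠ x' i →
    ¬ (M i x y <+: M i x' y))

/-- `L(x^n||y^n)`: total length of the concatenation `M₁(x₁,y₁) ⋯ Mₙ(xⁿ,yⁿ)`. -/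
def codeLen {n : ℕ} (M : Fin n → (Fin n → α) → (Fin n → β) → List Bool)
    (x : Fin n → α) (y : Fin n → β) : ℝ :=
  ∑ i, ((M i x y).length : ℝ)

/-!
Along a history `(x^{i-1}, y^i)` of positive probability the conditional pmf of `X_i` is dyadic
and sums to `1`, so by the converse of Kraft's inequality some prefix-free code gives each symbol
`a` a codeword of length exactly `-log₂ p(a | x^{i-1}, y^i)`; this code is used at time `i`.
The total length of the concatenation is then `∑ᵢ -log₂ p(xᵢ | x^{i-1}, y^i)`, whose expectation
is `∑ᵢ H(Xᵢ | X^{i-1}, Y^i)`.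

Kraft's converse: with `K = max k`, pack intervals of lengths `2^(K - k a)` into `[0, 2^K)` in
order of decreasing length, so that each starts at a multiple of its length; the `k a`-bit
expansion of that multiple is the codeword of `a`, and a codeword is a prefix of another exactly
when the second interval lies inside the first.
-/

namespace CausalCoding

-- The `l`-bit big-endian binary expansion of `m % 2 ^ l`.
def word (l m : ℕ) : List Bool := (List.range l).map fun j => m.testBit (l - 1 - j)

@[simp] lemma length_word (l m : ℕ) : (word l m).length = l := by simp [word]

lemma take_word {l l' : ℕ} (m : ℕ) (h : l ≤ l') :
    (word l' m).take l = word l (m / 2 ^ (l' - l)) := by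
  unfold word
  rw [← List.map_take, List.take_range, min_eq_left h]
  refine List.map_congr_left fun j hj => ?_
  rw [List.mem_range] at hj
  rw [← Nat.shiftRight_eq_div_pow, Nat.testBit_shiftRight]
  congr 1
  omega

lemma word_inj_of_lt {l m m' : ℕ} (hm : m < 2 ^ l) (hm' : m' < 2 ^ l)
    (h : word l m = word l m') : m = m' := by
  refine Nat.eq_of_testBit_eq fun t => ?_
  by_cases ht : t < l
  · have := congrArg (fun w : List Bool => w[l - 1 - t]?) h
    simp only [word, List.getElem?_map, List.getElem?_range (show l - 1 - t < l by omega),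
      Option.map_some, Option.some.injEq] at this
    rwa [show l - 1 - (l - 1 - t) = t by omega] at this
  · have hl : 2 ^ l ≤ 2 ^ t := Nat.pow_le_pow_right two_pos (by omega)
    rw [Nat.testBit_lt_two_pow (hm.trans_le hl), Nat.testBit_lt_two_pow (hm'.trans_le hl)]

lemma eq_div_of_word_prefix {la lb ma mb : ℕ} (ha : ma < 2 ^ la) (hb : mb < 2 ^ lb)
    (h : word la ma <+: word lb mb) : la ≤ lb ∧ ma = mb / 2 ^ (lb - la) := by
  have hlab : la ≤ lb := by simpa using h.length_le
  refine ⟨hlab, word_inj_of_lt ha ?_ ?_⟩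
  · refine Nat.div_lt_of_lt_mul (hb.trans_eq ?_)
    rw [← pow_add]; congr 1; omega
  · rw [List.prefix_iff_eq_take.1 h, length_word, take_word _ hlab]

def PrefixFree {ι : Type*} (c : ι → List Bool) : Prop := ∀ a b, a ≠ b → ¬ c a <+: c b

theorem exists_aligned_disjoint_offsets {ι : Type*} [DecidableEq ι] (f : ι → ℕ)
    (hf : ∀ a b, f a ≤ f b → f a ∣ f b) (S : Finset ι) :
    ∃ s : ι → ℕ, ∀ a ∈ S, f a ∣ s a ∧ s a + f a ≤ ∑ b ∈ S, f b ∧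
      ∀ b ∈ S, a ≠ b → s a + f a ≤ s b ∨ s b + f b ≤ s a := by
  induction S using Finset.induction_on_min_value f with
  | empty => exact ⟨0, by simp⟩
  | insert a S haS hmin ih =>
    obtain ⟨s, hs⟩ := ih
    refine ⟨Function.update s a (∑ b ∈ S, f b), ?_⟩
    have hne : ∀ b ∈ S, b ≠ a := fun b hb hba => haS (hba ▸ hb)
    simp only [Finset.mem_insert, Finset.sum_insert haS]
    rintro c (rfl | hc)
    · refine ⟨?_, by simp [add_comm], ?_⟩
      · simpa using Finset.dvd_sum fun b hb => hf c b (hmin b hb)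
      · rintro b (rfl | hb) hcb
        · exact absurd rfl hcb
        · simp [Function.update_of_ne (hne b hb), (hs b hb).2.1]
    · obtain ⟨hdvd, hle, hdisj⟩ := hs c hc
      simp only [Function.update_of_ne (hne c hc)]
      refine ⟨hdvd, by omega, ?_⟩
      rintro b (rfl | hb) hcb
      · simp [hle]
      · simpa [Function.update_of_ne (hne b hb)] using hdisj b hb hcb

lemma sum_two_pow_sub_le {ι : Type*} [Fintype ι] (k : ι → ℕ) {K : ℕ} (hkK : ∀ a, k a ≤ K)
    (hk : ∑ a, (2⁻¹ : ℝ) ^ k a ≤ 1) : ∑ a, 2 ^ (K - k a) ≤ 2 ^ K := by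
  have hterm : ∀ a, ((2 ^ (K - k a) : ℕ) : ℝ) = 2 ^ K * 2⁻¹ ^ k a := fun a => by
    rw [inv_pow, ← div_eq_mul_inv, eq_div_iff (by positivity)]
    norm_cast
    rw [← pow_add, Nat.sub_add_cancel (hkK a)]
  have : ((∑ a, 2 ^ (K - k a) : ℕ) : ℝ) ≤ 2 ^ K := by
    rw [Nat.cast_sum, Finset.sum_congr rfl fun a _ => hterm a, ← Finset.mul_sum]
    exact mul_le_of_le_one_right (by positivity) hk
  exact_mod_cast this

theorem exists_prefixFree_of_sum_le_one {ι : Type*} [Fintype ι] (k : ι → ℕ)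
    (hk : ∑ a, (2⁻¹ : ℝ) ^ k a ≤ 1) :
    ∃ c : ι → List Bool, PrefixFree c ∧ ∀ a, (c a).length = k a := by
  set K := Finset.univ.sup k
  have hkK : ∀ a, k a ≤ K := fun a => Finset.le_sup (Finset.mem_univ a)
  set f : ι → ℕ := fun a => 2 ^ (K - k a)
  have hfk : ∀ a, f a * 2 ^ k a = 2 ^ K := fun a => by
    rw [← pow_add, Nat.sub_add_cancel (hkK a)]
  have hsum : ∑ a, f a ≤ 2 ^ K := sum_two_pow_sub_le k hkK hk
  have hf : ∀ a b, f a ≤ f b → f a ∣ f b := fun a b h =>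
    Nat.pow_dvd_pow 2 ((Nat.pow_le_pow_iff_right one_lt_two).1 h)
  obtain ⟨s, hs⟩ := exists_aligned_disjoint_offsets f hf Finset.univ
  have hm : ∀ a, s a / f a < 2 ^ k a := fun a => by
    have := (hs a (Finset.mem_univ a)).2.1
    refine Nat.div_lt_of_lt_mul ?_
    rw [hfk]; have : 0 < f a := by positivity
    omega
  refine ⟨fun a => word (k a) (s a / f a), fun a b hab hpre => ?_, fun a => length_word _ _⟩
  obtain ⟨hkab, hdiv⟩ := eq_div_of_word_prefix (hm a) (hm b) hpre
  obtain ⟨hdvd, -, hdisj⟩ := hs a (Finset.mem_univ a)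
  have hfab : f a = f b * 2 ^ (k b - k a) := by
    simp only [f, ← pow_add]; congr 1; have := hkK b; omega
  have hblock : s b / f a = s a / f a := by
    rw [hdiv, hfab, ← Nat.div_div_eq_div_mul]
  have hfa : 0 < f a := by positivity
  have hfb : 0 < f b := by positivity
  have hlo : s a ≤ s b := by
    calc s a = s b / f a * f a := by rw [hblock, Nat.div_mul_cancel hdvd]
      _ ≤ s b := Nat.div_mul_le_self _ _
  have hhi : s b < s a + f a := by
    calc s b < s b / f a * f a + f a := Nat.lt_div_mul_add hfa
      _ = s a + f a := by rw [hblock, Nat.div_mul_cancel hdvd]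
  rcases hdisj b (Finset.mem_univ b) hab with h | h <;> omega

lemma exists_prefixFree_of_dyadic {ι : Type*} [Fintype ι] (q : ι → ℝ) :
    ∃ c : ι → List Bool, PrefixFree c ∧
      ((∀ a, ∃ k : ℕ, q a = 2⁻¹ ^ k) → ∑ a, q a ≤ 1 → ∀ a, q a = 2⁻¹ ^ (c a).length) := by
  by_cases hq : (∀ a, ∃ k : ℕ, q a = 2⁻¹ ^ k) ∧ ∑ a, q a ≤ 1
  · obtain ⟨hdy, hsum⟩ := hq
    choose k hk using hdy
    obtain ⟨c, hc, hlen⟩ := exists_prefixFree_of_sum_le_one k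
      (by simpa only [← hk] using hsum)
    exact ⟨c, hc, fun _ _ a => by rw [hlen, hk]⟩
  -- The encoder must be prefix-free after null histories too: fall back to a fixed-length code.
  · obtain ⟨c, hc, -⟩ := exists_prefixFree_of_sum_le_one (fun _ : ι => Fintype.card ι) (by
      rw [Finset.sum_const, Finset.card_univ, nsmul_eq_mul, inv_pow,
        mul_inv_le_iff₀ (by positivity), one_mul]
      exact_mod_cast (Fintype.card ι).lt_two_pow_self.le)
    exact ⟨c, hc, fun h h' => absurd ⟨h, h'⟩ hq⟩

def dyadicCode {ι : Type*} [Fintype ι] (q : ι → ℝ) : ι → List Bool :=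
  (exists_prefixFree_of_dyadic q).choose

lemma dyadicCode_prefixFree {ι : Type*} [Fintype ι] (q : ι → ℝ) : PrefixFree (dyadicCode q) :=
  (exists_prefixFree_of_dyadic q).choose_spec.1

lemma eq_inv_two_pow_length_dyadicCode {ι : Type*} [Fintype ι] {q : ι → ℝ}
    (hdy : ∀ a, ∃ k : ℕ, q a = 2⁻¹ ^ k) (hsum : ∑ a, q a ≤ 1) (a : ι) :
    q a = 2⁻¹ ^ (dyadicCode q a).length :=
  (exists_prefixFree_of_dyadic q).choose_spec.2 hdy hsum a

variable {n : ℕ}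

section
omit [DecidableEq α] [DecidableEq β]

lemma pr_congr (p : (Fin n → α) → (Fin n → β) → ℝ) {E E' : (Fin n → α) → (Fin n → β) → Prop}
    (h : ∀ x y, E x y ↔ E' x y) : pr p E = pr p E' := by
  simp only [pr, h]

lemma le_pr {p : (Fin n → α) → (Fin n → β) → ℝ} (hp0 : ∀ x y, 0 ≤ p x y)
    {E : (Fin n → α) → (Fin n → β) → Prop} {x : Fin n → α} {y : Fin n → β} (hE : E x y) :
    p x y ≤ pr p E := by
  have hnn : ∀ u v, 0 ≤ if E u v then p u v else 0 := fun u v => by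
    split_ifs <;> simp [hp0]
  calc p x y = if E x y then p x y else 0 := (if_pos hE).symm
    _ ≤ ∑ v, if E x v then p x v else 0 :=
      Finset.single_le_sum (fun v _ => hnn x v) (Finset.mem_univ y)
    _ ≤ pr p E :=
      Finset.single_le_sum (f := fun u => ∑ v, if E u v then p u v else 0)
        (fun u _ => Finset.sum_nonneg fun v _ => hnn u v) (Finset.mem_univ x)

lemma sum_pr_and_eq {γ : Type*} [Fintype γ] (p : (Fin n → α) → (Fin n → β) → ℝ)
    (E : (Fin n → α) → (Fin n → β) → Prop) (g : (Fin n → α) → (Fin n → β) → γ) :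
    ∑ c, pr p (fun x y => E x y ∧ g x y = c) = pr p E := by
  unfold pr
  rw [Finset.sum_comm]
  refine Finset.sum_congr rfl fun x _ => ?_
  rw [Finset.sum_comm]
  refine Finset.sum_congr rfl fun y _ => ?_
  by_cases h : E x y <;> simp [h]

/-- The event `(X^{i-1}, Y^i) = (x^{i-1}, y^i)`. -/
def History (i : Fin n) (x : Fin n → α) (y : Fin n → β) (x' : Fin n → α) (y' : Fin n → β) :
    Prop :=
  (∀ j, j < i → x' j = x j) ∧ ∀ j : Fin n, (j : ℕ) ≤ (i : ℕ) → y' j = y j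

omit [Fintype α] [Fintype β] in
lemma history_self (i : Fin n) (x : Fin n → α) (y : Fin n → β) : History i x y x y :=
  ⟨fun _ _ => rfl, fun _ _ => rfl⟩

omit [Fintype α] [Fintype β] in
lemma history_congr {i : Fin n} {x x' : Fin n → α} {y y' : Fin n → β}
    (hx : ∀ j, j < i → x j = x' j) (hy : ∀ j : Fin n, (j : ℕ) ≤ (i : ℕ) → y j = y' j) :
    History i x y = History i x' y' := by
  ext u v
  simp only [History]
  constructor
  · rintro ⟨hu, hv⟩
    exact ⟨fun j hj => (hu j hj).trans (hx j hj), fun j hj => (hv j hj).trans (hy j hj)⟩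
  · rintro ⟨hu, hv⟩
    exact ⟨fun j hj => (hu j hj).trans (hx j hj).symm,
      fun j hj => (hv j hj).trans (hy j hj).symm⟩

omit [Fintype α] [Fintype β] in
lemma history_update (i : Fin n) (x : Fin n → α) (y : Fin n → β) (a : α) :
    History i (Function.update x i a) y = History i x y :=
  history_congr (fun _ hj => Function.update_of_ne hj.ne _ _) (fun _ _ => rfl)

/-- The conditional pmf `p(· | x^{i-1}, y^i)` of the symbol `X_i`. -/
def condXDist (p : (Fin n → α) → (Fin n → β) → ℝ) (i : Fin n) (x : Fin n → α) (y : Fin n → β)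
    (a : α) : ℝ :=
  pr p (fun x' y' => History i x y x' y' ∧ x' i = a) / pr p (History i x y)

lemma condXDist_congr (p : (Fin n → α) → (Fin n → β) → ℝ) {i : Fin n} {x x' : Fin n → α}
    {y y' : Fin n → β} (hx : ∀ j, j < i → x j = x' j)
    (hy : ∀ j : Fin n, (j : ℕ) ≤ (i : ℕ) → y j = y' j) :
    condXDist p i x y = condXDist p i x' y' := by
  funext a
  simp only [condXDist, history_congr hx hy]

lemma condXDist_update (p : (Fin n → α) → (Fin n → β) → ℝ) (i : Fin n) (x : Fin n → α)
    (y : Fin n → β) (a : α) : condXDist p i (Function.update x i a) y = condXDist p i x y := by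
  funext b
  simp only [condXDist, history_update]

lemma sum_condXDist (p : (Fin n → α) → (Fin n → β) → ℝ) {i : Fin n} {x : Fin n → α}
    {y : Fin n → β} (h : pr p (History i x y) ≠ 0) : ∑ a, condXDist p i x y a = 1 := by
  simp only [condXDist, ← Finset.sum_div]
  rw [sum_pr_and_eq p (History i x y) fun x' _ => x' i, div_self h]

lemma condX_zero_eq_condXDist (p : (Fin n → α) → (Fin n → β) → ℝ) (i : Fin n)
    (x : Fin n → α) (y : Fin n → β) : condX p 0 i x y = condXDist p i x y (x i) := by
  unfold condX condXDist History
  simp only [add_zero]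
  congr 1
  exact pr_congr p fun _ _ => by tauto

def dyadicEncoder (p : (Fin n → α) → (Fin n → β) → ℝ) (i : Fin n) (x : Fin n → α)
    (y : Fin n → β) : List Bool :=
  dyadicCode (condXDist p i x y) (x i)

lemma isCausalEncoder_dyadicEncoder (p : (Fin n → α) → (Fin n → β) → ℝ) :
    IsCausalEncoder (dyadicEncoder p) := by
  refine ⟨fun i x x' y y' hx hy => ?_, fun i x x' y hx hne => ?_⟩
  · rw [dyadicEncoder, dyadicEncoder, condXDist_congr p (fun j hj => hx j hj.le) hy, hx i le_rfl]
  · rw [dyadicEncoder, dyadicEncoder, condXDist_congr p hx fun _ _ => rfl]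
    exact dyadicCode_prefixFree _ _ _ hne

lemma length_dyadicEncoder {p : (Fin n → α) → (Fin n → β) → ℝ}
    (hp0 : ∀ x y, 0 ≤ p x y)
    (hdyadic : ∀ i x y, 0 < pr p (History i x y) → ∃ k : ℕ, condX p 0 i x y = 2⁻¹ ^ k)
    {x : Fin n → α} {y : Fin n → β} (hxy : 0 < p x y) (i : Fin n) :
    ((dyadicEncoder p i x y).length : ℝ) = -Real.logb 2 (condX p 0 i x y) := by
  have hhist : 0 < pr p (History i x y) := hxy.trans_le (le_pr hp0 (history_self i x y))
  have hcode : condX p 0 i x y = 2⁻¹ ^ (dyadicEncoder p i x y).length := by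
    rw [condX_zero_eq_condXDist]
    refine eq_inv_two_pow_length_dyadicCode (fun a => ?_) (sum_condXDist p hhist.ne').le _
    obtain ⟨k, hk⟩ := hdyadic i (Function.update x i a) y (by rwa [history_update])
    rw [condX_zero_eq_condXDist, condXDist_update, Function.update_self] at hk
    exact ⟨k, hk⟩
  rw [hcode, inv_pow, Real.logb_inv, Real.logb_pow, Real.logb_self_eq_one one_lt_two, mul_one,
    neg_neg]

lemma HccX_eq_sum_mul_sum (p : (Fin n → α) → (Fin n → β) → ℝ) (d : ℕ) :
    HccX p d = ∑ x, ∑ y, p x y * ∑ i : Fin n, -Real.logb 2 (condX p d i x y) := by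
  simp only [HccX, HcondX, Finset.mul_sum, mul_neg, Finset.sum_neg_distrib]
  congr 1
  rw [Finset.sum_comm]
  refine Finset.sum_congr rfl fun x _ => ?_
  exact Finset.sum_comm

end

end CausalCoding

open CausalCoding

/-- if every conditional probability `p(xᵢ | x^{i-1}, y^i)` (whenever
the conditioning history has positive probability) is dyadic, i.e. equals `2^{-k}`
for some nonnegative integer `k`, then there is an instantaneous lossless source
encoder with causal side information achieving
`E[L(X^n||Y^n)] = Σᵢ H(Xᵢ | X^{i-1}, Y^i)` exactly. -/
theorem lossless_causal_coding_dyadic {n : ℕ}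
    (p : (Fin n → α) → (Fin n → β) → ℝ) (hp : IsPmf p)
    (hdyadic : ∀ (i : Fin n) (x : Fin n → α) (y : Fin n → β),
      0 < pr p (fun x' y' => (∀ j, j < i → x' j = x j) ∧
          ∀ j : Fin n, (j : ℕ) ≤ (i : ℕ) → y' j = y j) →
      ∃ k : ℕ, condX p 0 i x y = (2 : ℝ)⁻¹ ^ k) :
    ∃ M : Fin n → (Fin n → α) → (Fin n → β) → List Bool,
      IsCausalEncoder M ∧
      ∑ x, ∑ y, p x y * codeLen M x y = ∑ i, HcondX p 0 i := by
  refine ⟨dyadicEncoder p, isCausalEncoder_dyadicEncoder p, ?_⟩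
  rw [← HccX, HccX_eq_sum_mul_sum]
  refine Finset.sum_congr rfl fun x _ => Finset.sum_congr rfl fun y _ => ?_
  rcases (hp.1 x y).eq_or_lt with hzero | hpos
  · simp [← hzero]
  · exact congrArg (p x y * ·)
      (Finset.sum_congr rfl fun i _ => length_dyadicEncoder hp.1 hdyadic hpos i)
end
end

section
/- Cost of ignoring the forward link: if (X^n, Y^n) has joint pmf p(x^n,y^n) and a lossless code is designed to be optimal for the (incorrect) distribution q(x^n,y^n) = p(y^n)·p(x^n||y^{n-1}), then the ideal expected codelength E[−log q(X^n,Y^n)] equals I(X^n → Y^n) + H(X^n, Y^n); i.e., the redundancy is exactly the directed information I(X^n → Y^n). -/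
open scoped Classical
open Real

noncomputable section

variable {α β : Type} [Fintype α] [DecidableEq α] [Fintype β] [DecidableEq β]

/-!
Whenever `p(x^n, y^n) > 0`, the chain rule `p(x^n, y^n) = p(x^n || y^{n-1}) p(y^n || x^n)` and the
telescoping product `p(y^n) = ∏ᵢ p(yᵢ | y^{i-1})` give
`p(y^n) p(x^n || y^{n-1}) = p(x^n, y^n) / ∏ᵢ [p(yᵢ | y^{i-1}, x^i) / p(yᵢ | y^{i-1})]`.
Taking `-log` and the expectation under `p` turns the left side into the codelength, and the
right side into `H(X^n, Y^n)` plus the sum of the conditional mutual informations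
`I(X^i; Yᵢ | Y^{i-1})`.
Every conditional pmf involved is a ratio of the prefix probabilities
`P(X'^a = x^a, Y'^b = y^b)`, which is what makes both products telescope.
-/

theorem Finset.prod_fin_succ_div_eq {G₀ : Type*} [CommGroupWithZero G₀] {n : ℕ} (f : ℕ → G₀)
    (hf : ∀ k, f k ≠ 0) : ∏ i : Fin n, f (i + 1) / f i = f n / f 0 := by
  rw [Fin.prod_univ_eq_prod_range (fun k => f (k + 1) / f k)]
  induction n with
  | zero => simp [hf 0]
  | succ m ih =>
    rw [Finset.prod_range_succ, ih]
    field_simp [hf 0, hf m]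

section Agreement

variable {γ : Type*} {n : ℕ} {f g : Fin n → γ}

theorem Fin.agree_lt_and_eq_iff (i : Fin n) :
    ((∀ j, j < i → f j = g j) ∧ f i = g i) ↔ ∀ j : Fin n, (j : ℕ) < i + 1 → f j = g j := by
  refine ⟨fun ⟨hlt, heq⟩ j hj => ?_, fun h => ⟨fun j hj => h j (Nat.lt_succ_of_lt hj),
    h i (Nat.lt_succ_self _)⟩⟩
  rcases Nat.lt_succ_iff_lt_or_eq.mp hj with hj | hj
  · exact hlt j hj
  · exact Fin.ext hj ▸ heq

theorem Fin.agree_add_le_iff (d : ℕ) (i : Fin n) :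
    (∀ j : Fin n, (j : ℕ) + d ≤ i → f j = g j) ↔ ∀ j : Fin n, (j : ℕ) < i + 1 - d → f j = g j :=
  forall_congr' fun j => imp_congr_left (by omega)

end Agreement

section PrefixProbability

variable {α β : Type} [Fintype α] [Fintype β] {n : ℕ} {p : (Fin n → α) → (Fin n → β) → ℝ}

theorem pr_congr {E F : (Fin n → α) → (Fin n → β) → Prop} (h : ∀ x y, E x y ↔ F x y) :
    pr p E = pr p F := by
  simp only [pr, h]

theorem le_pr (hp : ∀ x y, 0 ≤ p x y) {E : (Fin n → α) → (Fin n → β) → Prop}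
    {x : Fin n → α} {y : Fin n → β} (hE : E x y) : p x y ≤ pr p E := by
  have hterm : ∀ x' y', 0 ≤ if E x' y' then p x' y' else 0 := fun x' y' => by
    split_ifs
    exacts [hp x' y', le_rfl]
  calc p x y = if E x y then p x y else 0 := (if_pos hE).symm
    _ ≤ ∑ y', if E x y' then p x y' else 0 :=
      Finset.single_le_sum (fun y' _ => hterm x y') (Finset.mem_univ y)
    _ ≤ pr p E :=
      Finset.single_le_sum (f := fun x' => ∑ y', if E x' y' then p x' y' else 0)
        (fun x' _ => Finset.sum_nonneg fun y' _ => hterm x' y') (Finset.mem_univ x)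

def prefixProb (p : (Fin n → α) → (Fin n → β) → ℝ) (x : Fin n → α) (y : Fin n → β)
    (a b : ℕ) : ℝ :=
  pr p fun x' y' =>
    (∀ j : Fin n, (j : ℕ) < a → x' j = x j) ∧ ∀ j : Fin n, (j : ℕ) < b → y' j = y j

theorem prefixProb_pos (hp : ∀ x y, 0 ≤ p x y) {x : Fin n → α} {y : Fin n → β}
    (hxy : 0 < p x y) (a b : ℕ) : 0 < prefixProb p x y a b :=
  hxy.trans_le (le_pr hp ⟨fun _ _ => rfl, fun _ _ => rfl⟩)

theorem prefixProb_self (x : Fin n → α) (y : Fin n → β) : prefixProb p x y n n = p x y := by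
  simp [prefixProb, pr, ← funext_iff, ite_and]

theorem prefixProb_zero_self (x : Fin n → α) (y : Fin n → β) :
    prefixProb p x y 0 n = pY p y := by
  simp [prefixProb, pr, pY, ← funext_iff]

theorem condX_eq_div_prefixProb (d : ℕ) (i : Fin n) (x : Fin n → α) (y : Fin n → β) :
    condX p d i x y =
      prefixProb p x y (i + 1) (i + 1 - d) / prefixProb p x y i (i + 1 - d) := by
  unfold condX prefixProb
  congr 1 <;> refine pr_congr fun x' y' => ?_
  · rw [← and_assoc, Fin.agree_lt_and_eq_iff, Fin.agree_add_le_iff]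
  · rw [Fin.agree_add_le_iff]
    rfl

theorem condY_eq_div_prefixProb (d : ℕ) (i : Fin n) (x : Fin n → α) (y : Fin n → β) :
    condY p d i x y =
      prefixProb p x y (i + 1 - d) (i + 1) / prefixProb p x y (i + 1 - d) i := by
  unfold condY prefixProb
  congr 1 <;> refine pr_congr fun x' y' => ?_
  · rw [← and_assoc, Fin.agree_lt_and_eq_iff, Fin.agree_add_le_iff, and_comm]
  · rw [Fin.agree_add_le_iff, and_comm]
    rfl

theorem condY_pos (hp : ∀ x y, 0 ≤ p x y) {x : Fin n → α} {y : Fin n → β} (hxy : 0 < p x y)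
    (d : ℕ) (i : Fin n) : 0 < condY p d i x y := by
  rw [condY_eq_div_prefixProb]
  exact div_pos (prefixProb_pos hp hxy _ _) (prefixProb_pos hp hxy _ _)

theorem prod_condY_eq_pY_div (hp : ∀ x y, 0 ≤ p x y) {x : Fin n → α} {y : Fin n → β}
    (hxy : 0 < p x y) : ∏ i, condY p n i x y = pY p y / prefixProb p x y 0 0 := by
  have hratio : ∀ i : Fin n,
      condY p n i x y = prefixProb p x y 0 (i + 1) / prefixProb p x y 0 i := fun i => by
    rw [condY_eq_div_prefixProb, Nat.sub_eq_zero_of_le i.isLt]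
  simp only [hratio]
  rw [Finset.prod_fin_succ_div_eq (prefixProb p x y 0) (fun k => (prefixProb_pos hp hxy 0 k).ne'),
    prefixProb_zero_self]

theorem ccX_one_mul_ccY_zero (hp : ∀ x y, 0 ≤ p x y) {x : Fin n → α} {y : Fin n → β}
    (hxy : 0 < p x y) : ccX p 1 x y * ccY p 0 x y = p x y / prefixProb p x y 0 0 := by
  have hpos := prefixProb_pos hp hxy
  have hratio : ∀ i : Fin n, condX p 1 i x y * condY p 0 i x y =
      prefixProb p x y (i + 1) (i + 1) / prefixProb p x y i i := fun i => by
    rw [condX_eq_div_prefixProb, condY_eq_div_prefixProb, Nat.add_sub_cancel, Nat.sub_zero]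
    field_simp [(hpos (i + 1) i).ne']
  rw [ccX, ccY, ← Finset.prod_mul_distrib]
  simp only [hratio]
  rw [Finset.prod_fin_succ_div_eq (fun k => prefixProb p x y k k) (fun k => (hpos k k).ne'),
    prefixProb_self]

theorem pY_mul_ccX_one (hp : ∀ x y, 0 ≤ p x y) {x : Fin n → α} {y : Fin n → β}
    (hxy : 0 < p x y) :
    pY p y * ccX p 1 x y = p x y / ∏ i, condY p 0 i x y / condY p n i x y := by
  have hpos := prefixProb_pos hp hxy
  have hccY : ccY p 0 x y ≠ 0 := (Finset.prod_pos fun i _ => condY_pos hp hxy 0 i).ne'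
  have hpY_pos : 0 < pY p y := prefixProb_zero_self (p := p) x y ▸ hpos 0 n
  have hchain := ccX_one_mul_ccY_zero hp hxy
  rw [Finset.prod_div_distrib, ← ccY, prod_condY_eq_pY_div hp hxy]
  field_simp [(hpos 0 0).ne', hpY_pos.ne'] at hchain ⊢
  exact hchain

theorem mul_logb_pY_mul_ccX_one (hp : ∀ x y, 0 ≤ p x y) (x : Fin n → α) (y : Fin n → β) :
    p x y * Real.logb 2 (pY p y * ccX p 1 x y) =
      p x y * Real.logb 2 (p x y) -
        ∑ i, p x y * Real.logb 2 (condY p 0 i x y / condY p n i x y) := by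
  rcases (hp x y).eq_or_lt with hzero | hxy
  · simp [← hzero]
  have hratio : ∀ i, condY p 0 i x y / condY p n i x y ≠ 0 := fun i =>
    (div_pos (condY_pos hp hxy 0 i) (condY_pos hp hxy n i)).ne'
  rw [pY_mul_ccX_one hp hxy,
    Real.logb_div hxy.ne' (Finset.prod_ne_zero_iff.mpr fun i _ => hratio i), Real.logb_prod _ _ fun i _ => hratio i, mul_sub, Finset.mul_sum]

end PrefixProbability

theorem cost_of_ignoring_forward_link_general {n : ℕ}
    (p : (Fin n → α) → (Fin n → β) → ℝ) (hp : IsPmf p) :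
    -(∑ x, ∑ y, p x y * Real.logb 2 (pY p y * ccX p 1 x y)) =
      dirXY p + Hjoint p := by
  have hswap : dirXY p =
      ∑ x, ∑ y, ∑ i, p x y * Real.logb 2 (condY p 0 i x y / condY p n i x y) := by
    simp only [dirXY, cmiXY]
    rw [Finset.sum_comm]
    exact Finset.sum_congr rfl fun x _ => Finset.sum_comm
  simp only [mul_logb_pY_mul_ccX_one hp.1, Finset.sum_sub_distrib, hswap, Hjoint]
  ring

/-- cost of ignoring the forward link. If the code is designed for the
incorrect distribution `q(x^n,y^n) = p(y^n) p(x^n||y^{n-1})`, the ideal expected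
codelength `E_p[−log q(X^n,Y^n)]` equals `I(X^n → Y^n) + H(X^n,Y^n)`; i.e. the
redundancy is exactly the directed information `I(X^n → Y^n)`. -/
theorem cost_of_ignoring_forward_link {n : ℕ}
    (p : (Fin n → α) → (Fin n → β) → ℝ) (hp : IsPmf p)
    (hq : ∀ x y, 0 < p x y → 0 < pY p y * ccX p 1 x y) :
    -(∑ x, ∑ y, p x y * Real.logb 2 (pY p y * ccX p 1 x y)) =
      dirXY p + Hjoint p :=
  cost_of_ignoring_forward_link_general p hp
end
end

section
/- Compression penalty under mismatched forward link: if X^n and Y^n are independent with pmfs p(x^n), p(y^n), but a lossless code is designed for the distribution q(x^n,y^n) = p(x^n)·p̃(y^n||x^n) (where p̃(y^n||x^n) comes from some joint p̃ with the correct marginals), then the ideal expected codelength E[−log q(X^n,Y^n)] = L₁(X^n → Y^n) + H(X^n) + H(Y^n); i.e., the redundancy is the first-type directed lautum information. -/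
open scoped Classical
open Real

noncomputable section

variable {α β : Type} [Fintype α] [DecidableEq α] [Fintype β] [DecidableEq β]

lemma neg_mul_mul_logb_mul_eq {B a b c : ℝ} (hab : 0 ≤ a * b) (hc : 0 < a * b → c ≠ 0) :
    -(a * b * logb B (a * c)) =
      a * b * logb B (b / c) - a * b * logb B a - a * b * logb B b := by
  rcases hab.eq_or_lt with hab | hab
  · -- the weight kills the junk values `logb B 0 = 0` on both sides
    rw [← hab]; ring
  · obtain ⟨ha, hb⟩ := mul_ne_zero_iff.mp hab.ne'
    rw [logb_mul ha (hc hab), logb_div hb (hc hab)]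
    ring

lemma sum_sum_mul_mul_left_of_sum_eq_one {ι κ : Type*} [Fintype ι] [Fintype κ]
    {f : ι → ℝ} {g : κ → ℝ} (hg : ∑ y, g y = 1) (φ : ι → ℝ) :
    ∑ x, ∑ y, f x * g y * φ x = ∑ x, f x * φ x := by
  simp_rw [← Finset.sum_mul, ← Finset.mul_sum, hg, mul_one]

lemma sum_sum_mul_mul_right_of_sum_eq_one {ι κ : Type*} [Fintype ι] [Fintype κ]
    {f : ι → ℝ} {g : κ → ℝ} (hf : ∑ x, f x = 1) (ψ : κ → ℝ) :
    ∑ x, ∑ y, f x * g y * ψ y = ∑ y, g y * ψ y := by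
  simp_rw [mul_assoc, ← Finset.mul_sum]
  rw [← Finset.sum_mul, hf, one_mul]

theorem compression_penalty_mismatched_forward_link_general {n : ℕ}
    (f : (Fin n → α) → ℝ) (g : (Fin n → β) → ℝ)
    (hf : (∀ x, 0 ≤ f x) ∧ ∑ x, f x = 1)
    (hg : (∀ y, 0 ≤ g y) ∧ ∑ y, g y = 1)
    (pt : (Fin n → α) → (Fin n → β) → ℝ)
    (hpos : ∀ x y, 0 < f x * g y → 0 < ccY pt 0 x y) :
    -(∑ x, ∑ y, f x * g y * Real.logb 2 (f x * ccY pt 0 x y)) =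
      (∑ x, ∑ y, f x * g y * Real.logb 2 (g y / ccY pt 0 x y)) +
        (-(∑ x, f x * Real.logb 2 (f x))) +
        (-(∑ y, g y * Real.logb 2 (g y))) := by
  obtain ⟨hf0, hf1⟩ := hf
  obtain ⟨hg0, hg1⟩ := hg
  have pointwise : ∀ x y, -(f x * g y * logb 2 (f x * ccY pt 0 x y)) =
      f x * g y * logb 2 (g y / ccY pt 0 x y) - f x * g y * logb 2 (f x) -
        f x * g y * logb 2 (g y) := fun x y =>
    neg_mul_mul_logb_mul_eq (mul_nonneg (hf0 x) (hg0 y)) fun h => (hpos x y h).ne'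
  calc -(∑ x, ∑ y, f x * g y * logb 2 (f x * ccY pt 0 x y))
      = ∑ x, ∑ y, -(f x * g y * logb 2 (f x * ccY pt 0 x y)) := by
        simp only [Finset.sum_neg_distrib]
    _ = _ := by
        simp only [pointwise, Finset.sum_sub_distrib, sum_sum_mul_mul_left_of_sum_eq_one hg1,
          sum_sum_mul_mul_right_of_sum_eq_one hf1]
        ring

/-- compression penalty under a mismatched forward link. `X^n ⟂ Y^n`
with pmfs `f`, `g`, but the code is designed for
`q(x^n,y^n) = f(x^n) p̃(y^n||x^n)`, where `p̃` is a joint pmf with the correct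
marginals. Then the ideal expected codelength satisfies
`E[−log q(X^n,Y^n)] = L₁(X^n → Y^n) + H(X^n) + H(Y^n)`; i.e. the redundancy is the
first-type directed lautum information. -/
theorem compression_penalty_mismatched_forward_link {n : ℕ}
    (f : (Fin n → α) → ℝ) (g : (Fin n → β) → ℝ)
    (hf : (∀ x, 0 ≤ f x) ∧ ∑ x, f x = 1)
    (hg : (∀ y, 0 ≤ g y) ∧ ∑ y, g y = 1)
    (pt : (Fin n → α) → (Fin n → β) → ℝ) (hpt : IsPmf pt)
    (hmargX : ∀ x, pX pt x = f x) (hmargY : ∀ y, pY pt y = g y)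
    (hpos : ∀ x y, 0 < f x * g y → 0 < ccY pt 0 x y) :
    -(∑ x, ∑ y, f x * g y * Real.logb 2 (f x * ccY pt 0 x y)) =
      (∑ x, ∑ y, f x * g y * Real.logb 2 (g y / ccY pt 0 x y)) +
        (-(∑ x, f x * Real.logb 2 (f x))) +
        (-(∑ y, g y * Real.logb 2 (g y))) :=
  compression_penalty_mismatched_forward_link_general f g hf hg pt hpos
end
end
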